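/- arXiv:2007.13643 — 2 statements merged into one kernel-verified Lean document; each statement's English description precedes it below -/
import Mathlib

section
/- Let k > 0 and let α, β, β', γ, γ' be complex numbers with Re(γ) > Re(β) > 0 and Re(γ') > Re(β') > 0, and let x, y be complex numbers with |x| + |y| < 1/k. Then the second Appell k-function has the double integral representation F_{2,k}(α,β,β';γ,γ';x,y) = [1/(k² B_k(β,γ−β) B_k(β',γ'−β'))] · ∫₀¹∫₀¹ t^{β/k−1} s^{β'/k−1} (1−t)^{(γ−β)/k−1} (1−s)^{(γ'−β')/k−1} (1−kxt−kys)^{−α/k} dt ds. -/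
/-!
Since `(x)_{n,k} = kⁿ (x/k)_n`, everything reduces to ordinary Pochhammer symbols and the
Euler beta function. For `‖u‖ + ‖v‖ < 1` the binomial series
`(1 - u - v)^(-c) = ∑ (c)_{m+n} uᵐ vⁿ / (m! n!)` converges absolutely (regroup along
the antidiagonals `m + n = N` to get the one-variable series at `‖u‖ + ‖v‖`). Taking
`u = k x t`, `v = k y s` with `t, s ∈ [0, 1]`, the series may be integrated term by term
against the beta weights, the `(m, n)` term giving
`B(β/k + m, (γ-β)/k) B(β'/k + n, (γ'-β')/k)`, and `B(a + m, d) = (a)_m / (a + d)_m · B(a, d)`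
turns this into the series defining `F_{2,k}`.
-/

open MeasureTheory Complex

/-- Pochhammer k-symbol: (x)_{n,k} = x(x+k)...(x+(n-1)k). -/
noncomputable def kPoch (k : ℝ) (x : ℂ) (n : ℕ) : ℂ :=
  ∏ i ∈ Finset.range n, (x + (i : ℂ) * (k : ℂ))

/-- k-hypergeometric function ₂F₁ₖ[a, b; c; x]. -/
noncomputable def hyp2F1k (k : ℝ) (a b c x : ℂ) : ℂ :=
  ∑' n : ℕ, kPoch k a n * kPoch k b n / kPoch k c n * x ^ n / (n.factorial : ℂ)

/-- First Appell k-function F_{1,k}(a, b, b'; c; x, y). -/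
noncomputable def F1k (k : ℝ) (a b b' c x y : ℂ) : ℂ :=
  ∑' p : ℕ × ℕ,
    kPoch k a (p.1 + p.2) * kPoch k b p.1 * kPoch k b' p.2 / kPoch k c (p.1 + p.2)
      * x ^ p.1 * y ^ p.2 / ((p.1.factorial : ℂ) * (p.2.factorial : ℂ))

/-- Second Appell k-function F_{2,k}(a, b, b'; c, c'; x, y). -/
noncomputable def F2k (k : ℝ) (a b b' c c' x y : ℂ) : ℂ :=
  ∑' p : ℕ × ℕ,
    kPoch k a (p.1 + p.2) * kPoch k b p.1 * kPoch k b' p.2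
      / (kPoch k c p.1 * kPoch k c' p.2)
      * x ^ p.1 * y ^ p.2 / ((p.1.factorial : ℂ) * (p.2.factorial : ℂ))

/-- Third Appell k-function F_{3,k}(a, a', b, b'; c; x, y). -/
noncomputable def F3k (k : ℝ) (a a' b b' c x y : ℂ) : ℂ :=
  ∑' p : ℕ × ℕ,
    kPoch k a p.1 * kPoch k a' p.2 * kPoch k b p.1 * kPoch k b' p.2
      / kPoch k c (p.1 + p.2)
      * x ^ p.1 * y ^ p.2 / ((p.1.factorial : ℂ) * (p.2.factorial : ℂ))

/-- k-Gamma function Γ_k(x) = ∫₀^∞ t^{x-1} e^{-t^k/k} dt. -/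
noncomputable def kGammaF (k : ℝ) (x : ℂ) : ℂ :=
  ∫ t in Set.Ioi (0 : ℝ), (t : ℂ) ^ (x - 1) * Complex.exp (-((t ^ k : ℝ) : ℂ) / (k : ℂ))

/-- k-Beta function B_k(x, y) = (1/k) ∫₀¹ t^{x/k-1} (1-t)^{y/k-1} dt. -/
noncomputable def kBetaF (k : ℝ) (x y : ℂ) : ℂ :=
  (1 / (k : ℂ)) * ∫ t in (0:ℝ)..1, (t : ℂ) ^ (x / (k : ℂ) - 1) * ((1 : ℂ) - (t : ℂ)) ^ (y / (k : ℂ) - 1)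

open Finset

lemma ascPochhammer_eval_ne_zero_of_re_pos {c : ℂ} (hc : 0 < c.re) (n : ℕ) :
    (ascPochhammer ℂ n).eval c ≠ 0 := by
  rw [Ne, ascPochhammer_eval_eq_zero_iff]
  rintro ⟨j, -, hj⟩
  have := congrArg re hj
  simp only [natCast_re, neg_re] at this
  linarith [(Nat.cast_nonneg j : (0 : ℝ) ≤ j)]

lemma sum_antidiagonal_mul_pow_mul_pow_div {K : Type*} [Field K] [CharZero K] (g : ℕ → K)
    (u v : K) (n : ℕ) :
    ∑ p ∈ antidiagonal n, g (p.1 + p.2) * u ^ p.1 * v ^ p.2 / (p.1.factorial * p.2.factorial)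
      = g n * (u + v) ^ n / n.factorial := by
  rw [(Commute.all u v).add_pow', mul_sum, sum_div]
  refine sum_congr rfl fun ⟨i, j⟩ hp => ?_
  rw [HasAntidiagonal.mem_antidiagonal] at hp
  subst hp
  have h : ((i + j).choose i : K) * i.factorial * j.factorial = (i + j).factorial := by
    exact_mod_cast Nat.choose_symm_add ▸ Nat.add_choose_mul_factorial_mul_factorial i j
  have hc : ((i + j).choose i : K) ≠ 0 := by
    exact_mod_cast (Nat.choose_pos (Nat.le_add_right i j)).ne'
  rw [nsmul_eq_mul, ← h]
  field_simp

lemma summable_of_summable_sum_antidiagonal {f : ℕ × ℕ → ℝ} (hf : ∀ p, 0 ≤ f p)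
    (h : Summable fun n => ∑ p ∈ antidiagonal n, f p) : Summable f := by
  rw [← HasAntidiagonal.sigmaAntidiagonalEquivProd.summable_iff]
  refine (summable_sigma_of_nonneg fun _ => hf _).2 ⟨fun _ => Summable.of_finite, ?_⟩
  simpa only [tsum_fintype, HasAntidiagonal.sigmaAntidiagonalEquivProd_apply, sum_coe_sort]
    using h

lemma HasSum.of_sum_antidiagonal {E : Type*} [NormedAddCommGroup E] {f : ℕ × ℕ → E} {a : E}
    (hf : Summable f) (h : HasSum (fun n => ∑ p ∈ antidiagonal n, f p) a) : HasSum f a := by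
  obtain ⟨b, hb⟩ := hf
  have := (HasAntidiagonal.sigmaAntidiagonalEquivProd.hasSum_iff.2 hb).sigma
    fun n => hasSum_fintype _
  simp only [Function.comp_def, HasAntidiagonal.sigmaAntidiagonalEquivProd_apply,
    sum_coe_sort] at this
  rwa [h.unique this]

lemma norm_mul_ofReal_pow_le {t : ℝ} (ht : t ∈ Set.uIcc 0 1) (z : ℂ) (m : ℕ) :
    ‖z * (t : ℂ) ^ m‖ ≤ ‖z‖ := by
  rw [Set.uIcc_of_le zero_le_one] at ht
  rw [norm_mul, norm_pow, norm_real, Real.norm_of_nonneg ht.1]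
  exact mul_le_of_le_one_right (norm_nonneg z) (pow_le_one₀ ht.1 ht.2)

namespace Complex

lemma betaIntegral_ne_zero {a d : ℂ} (ha : 0 < a.re) (hd : 0 < d.re) :
    betaIntegral a d ≠ 0 := by
  have hGamma := Gamma_mul_Gamma_eq_betaIntegral ha hd
  intro h
  rw [h, mul_zero] at hGamma
  exact mul_ne_zero (Gamma_ne_zero_of_re_pos ha) (Gamma_ne_zero_of_re_pos hd) hGamma

lemma Gamma_add_nat_eq_ascPochhammer_eval_mul {a : ℂ} (ha : 0 < a.re) (n : ℕ) :
    Gamma (a + n) = (ascPochhammer ℂ n).eval a * Gamma a := by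
  rw [← Gamma_add_nat_div_Gamma_eq a, div_mul_cancel₀ _ (Gamma_ne_zero_of_re_pos ha)]
  rintro j rfl
  simp only [neg_re, natCast_re, Left.neg_pos_iff] at ha
  linarith [(Nat.cast_nonneg j : (0 : ℝ) ≤ j)]

lemma betaIntegral_add_nat {a d : ℂ} (ha : 0 < a.re) (hd : 0 < d.re) (m : ℕ) :
    betaIntegral (a + m) d = (ascPochhammer ℂ m).eval a / (ascPochhammer ℂ m).eval (a + d)
      * betaIntegral a d := by
  have had : 0 < (a + d).re := by rw [add_re]; positivity
  have ham : 0 < (a + m).re := by rw [add_re, natCast_re]; positivity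
  have h₁ := Gamma_mul_Gamma_eq_betaIntegral ham hd
  have h₂ := Gamma_mul_Gamma_eq_betaIntegral ha hd
  rw [add_right_comm, Gamma_add_nat_eq_ascPochhammer_eval_mul had,
    Gamma_add_nat_eq_ascPochhammer_eval_mul ha] at h₁
  have := ascPochhammer_eval_ne_zero_of_re_pos had m
  field_simp
  apply mul_left_cancel₀ (Gamma_ne_zero_of_re_pos had)
  linear_combination (ascPochhammer ℂ m).eval a * h₂ - h₁

lemma integral_mul_pow_eq_betaIntegral (a d : ℂ) (m : ℕ) :
    ∫ t in (0 : ℝ)..1, (t : ℂ) ^ (a - 1) * (1 - (t : ℂ)) ^ (d - 1) * (t : ℂ) ^ m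
      = betaIntegral (a + m) d := by
  refine intervalIntegral.integral_congr_ae (Filter.Eventually.of_forall fun t ht => ?_)
  rw [Set.uIoc_of_le zero_le_one] at ht
  have ht : (t : ℂ) ≠ 0 := ofReal_ne_zero.2 ht.1.ne'
  rw [add_sub_right_comm, cpow_add _ _ ht, cpow_natCast]
  ring

lemma hasFPowerSeriesOnBall_one_sub_cpow_neg (c : ℂ) :
    HasFPowerSeriesOnBall (fun w => (1 - w) ^ (-c))
      (.ofScalars ℂ fun n => (ascPochhammer ℂ n).eval c / n.factorial) 0 1 := by
  have hcoeff (n : ℕ) :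
      Ring.choose (c + n - 1) n = (ascPochhammer ℂ n).eval c / n.factorial := by
    rw [← Ring.multichoose_eq, eq_div_iff (by simp [Nat.factorial_ne_zero]), mul_comm,
      ← nsmul_eq_mul, Ring.factorial_nsmul_multichoose_eq_ascPochhammer,
      Polynomial.ascPochhammer_smeval_eq_eval]
  simpa [hcoeff, cpow_neg] using one_div_one_sub_cpow_hasFPowerSeriesOnBall_zero c

lemma mem_eball_one_of_norm_lt_one {E : Type*} [SeminormedAddCommGroup E] {w : E}
    (hw : ‖w‖ < 1) : w ∈ Metric.eball (0 : E) 1 := by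
  rw [← ENNReal.ofReal_one, Metric.eball_ofReal]
  simpa using hw

lemma hasSum_ascPochhammer_eval_mul_pow {w : ℂ} (hw : ‖w‖ < 1) (c : ℂ) :
    HasSum (fun n => (ascPochhammer ℂ n).eval c * w ^ n / n.factorial) ((1 - w) ^ (-c)) := by
  have h := (hasFPowerSeriesOnBall_one_sub_cpow_neg c).hasSum (mem_eball_one_of_norm_lt_one hw)
  simp only [FormalMultilinearSeries.ofScalars_apply_eq, smul_eq_mul, div_mul_eq_mul_div,
    zero_add] at h
  exact h

lemma summable_norm_ascPochhammer_eval_mul_pow {w : ℂ} (hw : ‖w‖ < 1) (c : ℂ) :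
    Summable fun n => ‖(ascPochhammer ℂ n).eval c * w ^ n / n.factorial‖ := by
  have h := FormalMultilinearSeries.summable_norm_apply _ <|
    Metric.eball_subset_eball (hasFPowerSeriesOnBall_one_sub_cpow_neg c).r_le
      (mem_eball_one_of_norm_lt_one hw)
  simp only [FormalMultilinearSeries.ofScalars_apply_eq, smul_eq_mul, div_mul_eq_mul_div] at h
  exact h

lemma summable_norm_ascPochhammer_eval_mul_pow_mul_pow {u v : ℂ} (huv : ‖u‖ + ‖v‖ < 1)
    (c : ℂ) :
    Summable fun p : ℕ × ℕ => ‖(ascPochhammer ℂ (p.1 + p.2)).eval c * u ^ p.1 * v ^ p.2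
      / (p.1.factorial * p.2.factorial)‖ := by
  have hw : ‖((‖u‖ + ‖v‖ : ℝ) : ℂ)‖ < 1 := by
    rwa [norm_real, Real.norm_of_nonneg (by positivity)]
  refine summable_of_summable_sum_antidiagonal (fun _ => norm_nonneg _) ?_
  convert summable_norm_ascPochhammer_eval_mul_pow hw c using 2 with n
  simp only [norm_mul, norm_div, norm_pow, norm_natCast, norm_real, Real.norm_of_nonneg
    (by positivity : 0 ≤ ‖u‖ + ‖v‖)]
  exact sum_antidiagonal_mul_pow_mul_pow_div (fun n => ‖(ascPochhammer ℂ n).eval c‖) _ _ n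

lemma hasSum_ascPochhammer_eval_mul_pow_mul_pow {u v : ℂ} (huv : ‖u‖ + ‖v‖ < 1)
    (c : ℂ) :
    HasSum (fun p : ℕ × ℕ => (ascPochhammer ℂ (p.1 + p.2)).eval c * u ^ p.1 * v ^ p.2
      / (p.1.factorial * p.2.factorial)) ((1 - u - v) ^ (-c)) := by
  refine .of_sum_antidiagonal
    (summable_norm_ascPochhammer_eval_mul_pow_mul_pow huv c).of_norm ?_
  simp only [sum_antidiagonal_mul_pow_mul_pow_div fun n => (ascPochhammer ℂ n).eval c,
    sub_sub]
  exact hasSum_ascPochhammer_eval_mul_pow ((norm_add_le u v).trans_lt huv) c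

end Complex

section TermwiseIntegration

variable {w : ℝ → ℂ}

lemma integral_norm_mul_pow_le (hw : IntervalIntegrable w volume 0 1) (m : ℕ) :
    ∫ t in (0 : ℝ)..1, ‖w t * (t : ℂ) ^ m‖ ≤ ∫ t in (0 : ℝ)..1, ‖w t‖ := by
  refine intervalIntegral.integral_mono_on zero_le_one
    (hw.mul_continuousOn (by fun_prop)).norm hw.norm
    fun t ht => norm_mul_ofReal_pow_le (Set.Icc_subset_uIcc ht) (w t) m

lemma norm_integral_mul_pow_le (hw : IntervalIntegrable w volume 0 1) (m : ℕ) :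
    ‖∫ t in (0 : ℝ)..1, w t * (t : ℂ) ^ m‖ ≤ ∫ t in (0 : ℝ)..1, ‖w t‖ :=
  (intervalIntegral.norm_integral_le_integral_norm zero_le_one).trans
    (integral_norm_mul_pow_le hw m)

lemma intervalIntegral_mul_tsum_mul_pow (hw : IntervalIntegrable w volume 0 1) {ι : Type*}
    [Countable ι] {g : ι → ℂ} (hg : Summable fun i => ‖g i‖) (e : ι → ℕ) :
    ∫ t in (0 : ℝ)..1, w t * ∑' i, g i * (t : ℂ) ^ e i
      = ∑' i, g i * ∫ t in (0 : ℝ)..1, w t * (t : ℂ) ^ e i := by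
  have hint (i : ι) : IntervalIntegrable (fun t => g i * (w t * (t : ℂ) ^ e i)) volume 0 1 :=
    (hw.mul_continuousOn (by fun_prop)).const_mul (g i)
  have hsum :
      Summable fun i => ∫ t in Set.Ioc (0 : ℝ) 1, ‖g i * (w t * (t : ℂ) ^ e i)‖ := by
    refine (hg.mul_right (∫ t in (0 : ℝ)..1, ‖w t‖)).of_nonneg_of_le
      (fun i => integral_nonneg fun t => norm_nonneg (g i * (w t * (t : ℂ) ^ e i)))
      fun i => ?_
    simp only [norm_mul (g i), ← intervalIntegral.integral_of_le zero_le_one,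
      intervalIntegral.integral_const_mul]
    exact mul_le_mul_of_nonneg_left (integral_norm_mul_pow_le hw (e i)) (norm_nonneg (g i))
  have hpull (t : ℝ) :
      w t * ∑' i, g i * (t : ℂ) ^ e i = ∑' i, g i * (w t * (t : ℂ) ^ e i) := by
    rw [← tsum_mul_left]
    exact tsum_congr fun i => by ring
  simp only [hpull, intervalIntegral.integral_of_le zero_le_one, ← integral_const_mul]
  exact (integral_tsum_of_summable_integral_norm (fun i => (hint i).1) hsum).symm

lemma intervalIntegral_intervalIntegral_mul_tsum {w₁ w₂ : ℝ → ℂ}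
    (hw₁ : IntervalIntegrable w₁ volume 0 1) (hw₂ : IntervalIntegrable w₂ volume 0 1)
    {g : ℕ × ℕ → ℂ} (hg : Summable fun p => ‖g p‖) :
    ∫ s in (0 : ℝ)..1, ∫ t in (0 : ℝ)..1,
        w₁ t * w₂ s * ∑' p, g p * (t : ℂ) ^ p.1 * (s : ℂ) ^ p.2
      = ∑' p, g p * (∫ t in (0 : ℝ)..1, w₁ t * (t : ℂ) ^ p.1)
          * ∫ s in (0 : ℝ)..1, w₂ s * (s : ℂ) ^ p.2 := by
  set I₁ : ℕ → ℂ := fun m => ∫ t in (0 : ℝ)..1, w₁ t * (t : ℂ) ^ m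
  have inner : ∀ s ∈ Set.uIcc (0 : ℝ) 1,
      ∫ t in (0 : ℝ)..1, w₁ t * w₂ s * ∑' p, g p * (t : ℂ) ^ p.1 * (s : ℂ) ^ p.2
        = w₂ s * ∑' p, g p * I₁ p.1 * (s : ℂ) ^ p.2 := by
    intro s hs
    have hgs : Summable fun p => ‖g p * (s : ℂ) ^ p.2‖ :=
      hg.of_nonneg_of_le (fun _ => norm_nonneg _) fun p => norm_mul_ofReal_pow_le hs (g p) p.2
    calc _ = w₂ s * ∫ t in (0 : ℝ)..1,
          w₁ t * ∑' p, g p * (s : ℂ) ^ p.2 * (t : ℂ) ^ p.1 := by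
          rw [← intervalIntegral.integral_const_mul]
          congr 1 with t
          rw [tsum_congr fun p => mul_right_comm (g p) _ _]
          ring
      _ = w₂ s * ∑' p, g p * (s : ℂ) ^ p.2 * I₁ p.1 := by
          rw [intervalIntegral_mul_tsum_mul_pow hw₁ hgs Prod.fst]
      _ = w₂ s * ∑' p, g p * I₁ p.1 * (s : ℂ) ^ p.2 := by
          rw [tsum_congr fun p => mul_right_comm (g p) _ _]
  have hgI : Summable fun p => ‖g p * I₁ p.1‖ := by
    refine (hg.mul_right (∫ t in (0 : ℝ)..1, ‖w₁ t‖)).of_nonneg_of_le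
      (fun _ => norm_nonneg _) fun p => ?_
    rw [norm_mul]
    exact mul_le_mul_of_nonneg_left (norm_integral_mul_pow_le hw₁ _) (norm_nonneg _)
  rw [intervalIntegral.integral_congr inner,
    intervalIntegral_mul_tsum_mul_pow hw₂ hgI Prod.snd]

end TermwiseIntegration

lemma integral_integral_beta_mul_one_sub_cpow_neg {a d a' d' u v : ℂ} (ha : 0 < a.re)
    (hd : 0 < d.re) (ha' : 0 < a'.re) (hd' : 0 < d'.re) (huv : ‖u‖ + ‖v‖ < 1) (c : ℂ) :
    ∫ s in (0 : ℝ)..1, ∫ t in (0 : ℝ)..1,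
        (t : ℂ) ^ (a - 1) * (s : ℂ) ^ (a' - 1) * (1 - (t : ℂ)) ^ (d - 1) *
          (1 - (s : ℂ)) ^ (d' - 1) * (1 - u * t - v * s) ^ (-c)
      = ∑' p : ℕ × ℕ, (ascPochhammer ℂ (p.1 + p.2)).eval c * u ^ p.1 * v ^ p.2
          / (p.1.factorial * p.2.factorial)
          * betaIntegral (a + p.1) d * betaIntegral (a' + p.2) d' := by
  have hexp : ∀ s ∈ Set.uIcc (0 : ℝ) 1, ∀ t ∈ Set.uIcc (0 : ℝ) 1,
      (1 - u * t - v * s) ^ (-c) = ∑' p : ℕ × ℕ, (ascPochhammer ℂ (p.1 + p.2)).eval c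
        * u ^ p.1 * v ^ p.2 / (p.1.factorial * p.2.factorial)
        * (t : ℂ) ^ p.1 * (s : ℂ) ^ p.2 := by
    intro s hs t ht
    have hnorm : ‖u * t‖ + ‖v * s‖ < 1 := by
      have hut := norm_mul_ofReal_pow_le ht u 1
      have hvs := norm_mul_ofReal_pow_le hs v 1
      rw [pow_one] at hut hvs
      linarith
    rw [← (hasSum_ascPochhammer_eval_mul_pow_mul_pow hnorm c).tsum_eq]
    exact tsum_congr fun p => by ring
  calc _ = ∫ s in (0 : ℝ)..1, ∫ t in (0 : ℝ)..1,
        (t : ℂ) ^ (a - 1) * (1 - (t : ℂ)) ^ (d - 1)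
          * ((s : ℂ) ^ (a' - 1) * (1 - (s : ℂ)) ^ (d' - 1))
          * ∑' p : ℕ × ℕ, (ascPochhammer ℂ (p.1 + p.2)).eval c * u ^ p.1 * v ^ p.2
            / (p.1.factorial * p.2.factorial) * (t : ℂ) ^ p.1 * (s : ℂ) ^ p.2 := by
        refine intervalIntegral.integral_congr fun s hs =>
          intervalIntegral.integral_congr fun t ht => ?_
        simp only [hexp s hs t ht]
        ring
    _ = _ := by
        rw [intervalIntegral_intervalIntegral_mul_tsum (betaIntegral_convergent ha hd)
          (betaIntegral_convergent ha' hd')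
          (summable_norm_ascPochhammer_eval_mul_pow_mul_pow huv c)]
        simp only [integral_mul_pow_eq_betaIntegral]

lemma kPoch_eq_pow_mul_ascPochhammer_eval {k : ℝ} (hk : (k : ℂ) ≠ 0) (x : ℂ) (n : ℕ) :
    kPoch k x n = (k : ℂ) ^ n * (ascPochhammer ℂ n).eval (x / k) := by
  induction n with
  | zero => simp [kPoch]
  | succ n ih =>
    rw [kPoch, prod_range_succ, ← kPoch, ih, ascPochhammer_succ_eval]
    field_simp
    ring

lemma kBetaF_eq_betaIntegral (k : ℝ) (x y : ℂ) :
    kBetaF k x y = 1 / k * betaIntegral (x / k) (y / k) := rfl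

theorem F2k_integral_repr (k : ℝ) (hk : 0 < k) (α β β' γ γ' x y : ℂ)
    (hβ : 0 < β.re) (hγβ : β.re < γ.re) (hβ' : 0 < β'.re) (hγβ' : β'.re < γ'.re)
    (hxy : ‖x‖ + ‖y‖ < 1 / k) :
    F2k k α β β' γ γ' x y =
      1 / ((k : ℂ) ^ 2 * kBetaF k β (γ - β) * kBetaF k β' (γ' - β')) *
        ∫ s in (0:ℝ)..1, ∫ t in (0:ℝ)..1,
          (t : ℂ) ^ (β / (k : ℂ) - 1) * (s : ℂ) ^ (β' / (k : ℂ) - 1) *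
          ((1 : ℂ) - (t : ℂ)) ^ ((γ - β) / (k : ℂ) - 1) *
          ((1 : ℂ) - (s : ℂ)) ^ ((γ' - β') / (k : ℂ) - 1) *
          ((1 : ℂ) - (k : ℂ) * x * (t : ℂ) - (k : ℂ) * y * (s : ℂ)) ^ (-α / (k : ℂ)) := by
  have hk' : (k : ℂ) ≠ 0 := ofReal_ne_zero.2 hk.ne'
  have hre {z : ℂ} (hz : 0 < z.re) : 0 < (z / k).re := by rw [div_ofReal_re]; positivity
  have hsub {z w : ℂ} (h : z.re < w.re) : 0 < ((w - z) / k).re :=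
    hre (by rw [sub_re]; linarith)
  have huv : ‖(k : ℂ) * x‖ + ‖(k : ℂ) * y‖ < 1 := by
    rw [norm_mul, norm_mul, norm_real, Real.norm_of_nonneg hk.le, ← mul_add]
    rwa [lt_div_iff₀ hk, mul_comm] at hxy
  rw [neg_div, integral_integral_beta_mul_one_sub_cpow_neg (hre hβ) (hsub hγβ) (hre hβ')
    (hsub hγβ') huv, F2k, kBetaF_eq_betaIntegral, kBetaF_eq_betaIntegral, ← tsum_mul_left]
  refine tsum_congr fun ⟨m, n⟩ => ?_
  have hγ : β / k + (γ - β) / k = γ / k := by ring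
  have hγ' : β' / k + (γ' - β') / k = γ' / k := by ring
  have hB := betaIntegral_ne_zero (hre hβ) (hsub hγβ)
  have hB' := betaIntegral_ne_zero (hre hβ') (hsub hγβ')
  have hP := ascPochhammer_eval_ne_zero_of_re_pos (hre (hβ.trans hγβ)) m
  have hP' := ascPochhammer_eval_ne_zero_of_re_pos (hre (hβ'.trans hγβ')) n
  simp only [betaIntegral_add_nat (hre hβ) (hsub hγβ),
    betaIntegral_add_nat (hre hβ') (hsub hγβ'), hγ, hγ',
    kPoch_eq_pow_mul_ascPochhammer_eval hk']
  field_simp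
  ring
end

section
/- Let k > 0, let α, β, γ, δ be complex numbers with Re(β) > Re(α) > 0 and Re(δ) > Re(γ) > 0, and let t, x be complex numbers with |x| < 1/k, |t| < 1/k and |(1−kx)t| < 1/k. Then Σ_{n≥0} [(β)_{n,k}(γ)_{n,k} / ((δ)_{n,k} n!)] · ₂F₁ₖ[−nk, α; β; x] · t^n = F_{1,k}(γ, β−α, α; δ; t, (1−kx)t). -/
open MeasureTheory Complex

/-!
Fix `n`. Expanding `(1 - kx)^q` binomially and regrouping the resulting triple sum, the
Chu–Vandermonde identity `∑_{p+q=n} (a)_{p,k}/p! · (b)_{q,k}/q! = (a+b)_{n,k}/n!` gives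
`(β)_{n,k}/n! · ₂F₁ₖ[-nk, α; β; x] = ∑_{p+q=n} (β-α)_{p,k}/p! · (α)_{q,k}/q! · (1-kx)^q`,
so the `n`-th term of the left-hand side is the `n`-th antidiagonal block of the double series
of `F_{1,k}`. That double series converges absolutely: it is dominated termwise by a real double
series whose antidiagonal blocks, again by Vandermonde, are the terms of a real `₂F₁ₖ` series at
`max ‖t‖ ‖(1 - kx)t‖ < 1/k`, which converges by the ratio test.
-/

open Finset Filter Topology

section RisingProd

variable {R : Type*} [CommRing R]

def risingProd (a k : R) (n : ℕ) : R :=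
  ∏ i ∈ range n, (a + i * k)

@[simp]
theorem risingProd_zero (a k : R) : risingProd a k 0 = 1 := rfl

theorem risingProd_succ (a k : R) (n : ℕ) :
    risingProd a k (n + 1) = risingProd a k n * (a + n * k) :=
  prod_range_succ _ _

theorem risingProd_add (a k : R) (m n : ℕ) :
    risingProd a k (m + n) = risingProd a k m * risingProd (a + m * k) k n := by
  simp only [risingProd, prod_range_add, Nat.cast_add, add_mul, add_assoc]

theorem risingProd_neg_natCast_mul (k : R) (n m : ℕ) :
    risingProd (-(n * k)) k m = (-k) ^ m * n.descFactorial m := by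
  induction m with
  | zero => simp
  | succ m ih =>
    rw [risingProd_succ, ih, Nat.descFactorial_succ, pow_succ]
    rcases le_or_gt m n with hmn | hnm
    · push_cast [hmn]
      ring
    · simp [Nat.descFactorial_of_lt hnm]

theorem risingProd_add_eq_sum_antidiagonal (a b k : R) (n : ℕ) :
    risingProd (a + b) k n =
      ∑ pq ∈ antidiagonal n, n.choose pq.1 * (risingProd a k pq.1 * risingProd b k pq.2) := by
  induction n with
  | zero => simp
  | succ n ih =>
    rw [sum_antidiagonal_choose_succ_mul (fun p q => risingProd a k p * risingProd b k q),
      risingProd_succ, ih, sum_mul, ← sum_add_distrib]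
    refine sum_congr rfl fun pq hpq => ?_
    rw [HasAntidiagonal.mem_antidiagonal] at hpq
    rw [Nat.choose_symm_of_eq_add hpq.symm, risingProd_succ, risingProd_succ, ← hpq]
    push_cast
    ring

end RisingProd

section Field

variable {K : Type*} [Field K] [CharZero K]

theorem sum_antidiagonal_risingProd_div_factorial (a b k : K) (n : ℕ) :
    ∑ pq ∈ antidiagonal n,
        risingProd a k pq.1 / pq.1.factorial * (risingProd b k pq.2 / pq.2.factorial) =
      risingProd (a + b) k n / n.factorial := by
  rw [risingProd_add_eq_sum_antidiagonal, sum_div]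
  refine sum_congr rfl fun pq hpq => ?_
  rw [HasAntidiagonal.mem_antidiagonal] at hpq
  rw [← hpq, Nat.cast_add_choose]
  field_simp [Nat.factorial_ne_zero]

theorem sum_range_risingProd_div_factorial (a b k : K) (n : ℕ) :
    ∑ p ∈ range (n + 1),
        risingProd a k p / p.factorial * (risingProd b k (n - p) / (n - p).factorial) =
      risingProd (a + b) k n / n.factorial := by
  rw [← sum_antidiagonal_risingProd_div_factorial, Nat.sum_antidiagonal_eq_sum_range_succ_mk]

theorem risingProd_div_factorial_mul_add_one_pow (a k z : K) (q : ℕ) :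
    risingProd a k q / q.factorial * (z + 1) ^ q =
      ∑ m ∈ range (q + 1), risingProd a k m / m.factorial * z ^ m *
        (risingProd (a + m * k) k (q - m) / (q - m).factorial) := by
  rw [add_pow, mul_sum]
  refine sum_congr rfl fun m hm => ?_
  have hmq : m ≤ q := Nat.lt_succ_iff.mp (mem_range.mp hm)
  rw [Nat.cast_choose K hmq, one_pow, mul_one]
  conv_lhs => rw [← Nat.add_sub_cancel' hmq, risingProd_add, Nat.add_sub_cancel' hmq]
  field_simp [Nat.factorial_ne_zero]

theorem sum_antidiagonal_risingProd_sub_mul_add_one_pow (a b k z : K) (n : ℕ) :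
    ∑ pq ∈ antidiagonal n, risingProd (b - a) k pq.1 / pq.1.factorial *
        (risingProd a k pq.2 / pq.2.factorial * (z + 1) ^ pq.2) =
      ∑ m ∈ range (n + 1), risingProd a k m / m.factorial * z ^ m *
        (risingProd (b + m * k) k (n - m) / (n - m).factorial) := by
  simp only [Nat.sum_antidiagonal_eq_sum_range_succ_mk, risingProd_div_factorial_mul_add_one_pow,
    mul_sum]
  rw [sum_comm' (t' := range (n + 1)) (s' := fun m => range (n - m + 1))
    (fun p m => by simp only [mem_range]; omega)]
  refine sum_congr rfl fun m hm => ?_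
  rw [show b + m * k = b - a + (a + m * k) by ring, ← sum_range_risingProd_div_factorial, mul_sum]
  refine sum_congr rfl fun p hp => ?_
  rw [show n - p - m = n - m - p by omega]
  ring

end Field

theorem kPoch_eq_risingProd (k : ℝ) (x : ℂ) (n : ℕ) : kPoch k x n = risingProd x (k : ℂ) n := rfl

theorem hyp2F1k_neg_natCast_mul (k : ℝ) (a b x : ℂ) (n : ℕ) :
    hyp2F1k k (-((n : ℂ) * (k : ℂ))) a b x =
      ∑ m ∈ range (n + 1),
        kPoch k (-((n : ℂ) * (k : ℂ))) m * kPoch k a m / kPoch k b m * x ^ m / m.factorial := by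
  refine tsum_eq_sum fun m hm => ?_
  rw [kPoch_eq_risingProd, risingProd_neg_natCast_mul,
    Nat.descFactorial_of_lt (by simpa [Nat.lt_succ_iff] using hm)]
  simp

theorem kPoch_div_factorial_mul_hyp2F1k_neg {k : ℝ} {b : ℂ} {n : ℕ} (hb : kPoch k b n ≠ 0)
    (a x : ℂ) :
    kPoch k b n / n.factorial * hyp2F1k k (-((n : ℂ) * (k : ℂ))) a b x =
      ∑ m ∈ range (n + 1), kPoch k a m / m.factorial * (-(k * x)) ^ m *
        (kPoch k (b + m * k) (n - m) / (n - m).factorial) := by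
  rw [hyp2F1k_neg_natCast_mul, mul_sum]
  refine sum_congr rfl fun m hm => ?_
  have hmn : m ≤ n := Nat.lt_succ_iff.mp (mem_range.mp hm)
  have hsplit : kPoch k b n = kPoch k b m * kPoch k (b + m * k) (n - m) := by
    conv_lhs => rw [← Nat.add_sub_cancel' hmn]
    exact risingProd_add _ _ _ _
  have hbm : kPoch k b m ≠ 0 := left_ne_zero_of_mul (hsplit ▸ hb)
  have hdesc : (n.descFactorial m : ℂ) * (n - m).factorial = n.factorial := by
    rw [mul_comm]
    exact_mod_cast Nat.factorial_mul_descFactorial hmn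
  have hdesc0 : (n.descFactorial m : ℂ) ≠ 0 :=
    left_ne_zero_of_mul (hdesc ▸ Nat.cast_ne_zero.mpr (Nat.factorial_ne_zero n))
  rw [kPoch_eq_risingProd _ (-_), risingProd_neg_natCast_mul, hsplit, ← hdesc]
  field_simp [Nat.factorial_ne_zero]
  ring

noncomputable def F1kTerm (k : ℝ) (a b b' c x y : ℂ) (pq : ℕ × ℕ) : ℂ :=
  kPoch k a (pq.1 + pq.2) * kPoch k b pq.1 * kPoch k b' pq.2 / kPoch k c (pq.1 + pq.2)
    * x ^ pq.1 * y ^ pq.2 / ((pq.1.factorial : ℂ) * (pq.2.factorial : ℂ))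

theorem F1k_eq_tsum_F1kTerm (k : ℝ) (a b b' c x y : ℂ) :
    F1k k a b b' c x y = ∑' pq, F1kTerm k a b b' c x y pq := rfl

theorem kPoch_mul_div_mul_hyp2F1k_neg_mul_pow {k : ℝ} {β : ℂ} {n : ℕ} (hβ : kPoch k β n ≠ 0)
    (α γ δ t x : ℂ) :
    kPoch k β n * kPoch k γ n / (kPoch k δ n * (n.factorial : ℂ)) *
        hyp2F1k k (-((n : ℂ) * (k : ℂ))) α β x * t ^ n =
      ∑ pq ∈ antidiagonal n, F1kTerm k γ (β - α) α δ t ((1 - (k : ℂ) * x) * t) pq := by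
  have key : ∑ pq ∈ antidiagonal n, kPoch k (β - α) pq.1 / pq.1.factorial *
        (kPoch k α pq.2 / pq.2.factorial * (-(k * x) + 1) ^ pq.2) =
      kPoch k β n / n.factorial * hyp2F1k k (-((n : ℂ) * (k : ℂ))) α β x :=
    (sum_antidiagonal_risingProd_sub_mul_add_one_pow α β (k : ℂ) (-(k * x)) n).trans
      (kPoch_div_factorial_mul_hyp2F1k_neg hβ α x).symm
  calc _ = kPoch k γ n / kPoch k δ n * t ^ n *
        (kPoch k β n / n.factorial * hyp2F1k k (-((n : ℂ) * (k : ℂ))) α β x) := by ring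
    _ = _ := by
      rw [← key, mul_sum]
      refine sum_congr rfl fun pq hpq => ?_
      rw [HasAntidiagonal.mem_antidiagonal] at hpq
      rw [F1kTerm, ← hpq, pow_add, mul_pow]
      ring

section Antidiagonal

variable {A : Type*} [AddCommMonoid A] [HasAntidiagonal A]

theorem Summable.tsum_eq_tsum_sum_antidiagonal {α : Type*} [AddCommMonoid α] [TopologicalSpace α]
    [ContinuousAdd α] [T3Space α] {f : A × A → α} (hf : Summable f) :
    ∑' pq, f pq = ∑' n, ∑ pq ∈ antidiagonal n, f pq := by
  rw [← HasAntidiagonal.sigmaAntidiagonalEquivProd.tsum_eq]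
  exact ((HasAntidiagonal.sigmaAntidiagonalEquivProd.summable_iff.mpr hf).tsum_sigma'
    fun n => (hasSum_fintype _).summable).trans (tsum_congr fun n => tsum_subtype _ f)

theorem summable_of_nonneg_of_summable_sum_antidiagonal {f : A × A → ℝ} (hf : 0 ≤ f)
    (h : Summable fun n => ∑ pq ∈ antidiagonal n, f pq) : Summable f := by
  rw [← HasAntidiagonal.sigmaAntidiagonalEquivProd.summable_iff]
  refine (summable_sigma_of_nonneg fun _ => hf _).mpr ⟨fun n => (hasSum_fintype _).summable, ?_⟩
  simpa only [tsum_fintype, HasAntidiagonal.sigmaAntidiagonalEquivProd, Equiv.coe_fn_mk,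
    sum_coe_sort] using h

end Antidiagonal

theorem risingProd_nonneg {a k : ℝ} (ha : 0 ≤ a) (hk : 0 ≤ k) (n : ℕ) : 0 ≤ risingProd a k n :=
  prod_nonneg fun _ _ => by positivity

theorem risingProd_pos {a k : ℝ} (ha : 0 < a) (hk : 0 ≤ k) (n : ℕ) : 0 < risingProd a k n :=
  prod_pos fun _ _ => by positivity

theorem summable_risingProd_mul_div_factorial_mul_pow {k a b c X : ℝ} (hk : 0 < k) (ha : 0 ≤ a)
    (hb : 0 ≤ b) (hc : 0 < c) (hX : 0 ≤ X) (hkX : k * X < 1) :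
    Summable fun n : ℕ =>
      risingProd a k n * risingProd b k n / (risingProd c k n * n.factorial) * X ^ n := by
  set u : ℕ → ℝ := fun n =>
    risingProd a k n * risingProd b k n / (risingProd c k n * n.factorial) * X ^ n
  have hu : ∀ n, 0 ≤ u n := fun n => by
    have := risingProd_nonneg ha hk.le n
    have := risingProd_nonneg hb hk.le n
    have := risingProd_pos hc hk.le n
    positivity
  have hstep : ∀ n : ℕ,
      u (n + 1) = X * ((a + k * n) / (1 + 1 * n)) * ((b + k * n) / (c + k * n)) * u n := by
    intro n
    have := risingProd_pos hc hk.le n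
    have : 0 < c + k * n := by positivity
    simp only [u, risingProd_succ, Nat.factorial_succ, pow_succ]
    push_cast
    field_simp
    ring
  have hratio : Tendsto (fun n : ℕ => X * ((a + k * n) / (1 + 1 * n)) * ((b + k * n) / (c + k * n)))
      atTop (𝓝 (k * X)) := by
    have h := (tendsto_const_nhds (x := X)).mul
      (tendsto_add_mul_div_add_mul_atTop_nhds a 1 k one_ne_zero) |>.mul
      (tendsto_add_mul_div_add_mul_atTop_nhds b c k hk.ne')
    rwa [div_one, div_self hk.ne', mul_one, mul_comm] at h
  refine summable_of_ratio_norm_eventually_le (r := (1 + k * X) / 2) (by linarith) ?_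
  filter_upwards [hratio.eventually (ge_mem_nhds (by linarith : k * X < (1 + k * X) / 2))]
    with n hn
  rw [Real.norm_of_nonneg (hu _), Real.norm_of_nonneg (hu _), hstep]
  exact mul_le_mul_of_nonneg_right hn (hu n)

theorem norm_kPoch_le {k : ℝ} (hk : 0 ≤ k) (z : ℂ) (n : ℕ) :
    ‖kPoch k z n‖ ≤ risingProd ‖z‖ k n := by
  rw [kPoch, norm_prod]
  refine prod_le_prod (fun _ _ => norm_nonneg _) fun i _ => (norm_add_le _ _).trans_eq ?_
  simp [abs_of_nonneg hk]

theorem risingProd_re_le_norm_kPoch {k : ℝ} (hk : 0 ≤ k) {z : ℂ} (hz : 0 ≤ z.re) (n : ℕ) :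
    risingProd z.re k n ≤ ‖kPoch k z n‖ := by
  rw [kPoch, norm_prod]
  refine prod_le_prod (fun _ _ => by positivity) fun i _ => ?_
  simpa using re_le_norm (z + i * k)

theorem kPoch_ne_zero {k : ℝ} (hk : 0 ≤ k) {z : ℂ} (hz : 0 < z.re) (n : ℕ) : kPoch k z n ≠ 0 :=
  norm_pos_iff.mp <| (risingProd_pos hz hk n).trans_le (risingProd_re_le_norm_kPoch hk hz.le n)

theorem summable_F1kTerm {k : ℝ} (hk : 0 < k) (a b b' : ℂ) {c x y : ℂ} (hc : 0 < c.re)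
    (hx : ‖x‖ < 1 / k) (hy : ‖y‖ < 1 / k) : Summable (F1kTerm k a b b' c x y) := by
  set X := max ‖x‖ ‖y‖
  have hkX : k * X < 1 := by
    rw [← lt_div_iff₀' hk]
    exact max_lt hx hy
  set M : ℕ × ℕ → ℝ := fun pq =>
    risingProd ‖a‖ k (pq.1 + pq.2) / risingProd c.re k (pq.1 + pq.2) *
      (risingProd ‖b‖ k pq.1 / pq.1.factorial * (risingProd ‖b'‖ k pq.2 / pq.2.factorial)) *
        X ^ (pq.1 + pq.2)
  have hM : 0 ≤ M := fun pq => by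
    have := risingProd_nonneg (norm_nonneg a) hk.le (pq.1 + pq.2)
    have := risingProd_nonneg (norm_nonneg b) hk.le pq.1
    have := risingProd_nonneg (norm_nonneg b') hk.le pq.2
    have := risingProd_pos hc hk.le (pq.1 + pq.2)
    positivity
  have hsum : ∀ n, ∑ pq ∈ antidiagonal n, M pq =
      risingProd ‖a‖ k n * risingProd (‖b‖ + ‖b'‖) k n / (risingProd c.re k n * n.factorial) *
        X ^ n := by
    intro n
    rw [← div_mul_div_comm, ← sum_antidiagonal_risingProd_div_factorial, mul_sum, sum_mul]
    refine sum_congr rfl fun pq hpq => ?_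
    rw [HasAntidiagonal.mem_antidiagonal] at hpq
    simp only [M, hpq]
  have hbound : ∀ pq, ‖F1kTerm k a b b' c x y pq‖ ≤ M pq := by
    rintro ⟨p, q⟩
    calc ‖F1kTerm k a b b' c x y (p, q)‖
        = ‖kPoch k a (p + q)‖ / ‖kPoch k c (p + q)‖ *
            (‖kPoch k b p‖ / p.factorial * (‖kPoch k b' q‖ / q.factorial)) *
              (‖x‖ ^ p * ‖y‖ ^ q) := by
          simp only [F1kTerm, norm_div, norm_mul, norm_pow, Complex.norm_natCast]
          ring
      _ ≤ M (p, q) := by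
          have := norm_kPoch_le hk.le a (p + q)
          have := risingProd_re_le_norm_kPoch hk.le hc.le (p + q)
          have := norm_kPoch_le hk.le b p
          have := norm_kPoch_le hk.le b' q
          have := risingProd_nonneg (norm_nonneg a) hk.le (p + q)
          have := risingProd_nonneg (norm_nonneg b) hk.le p
          have := risingProd_nonneg (norm_nonneg b') hk.le q
          have := risingProd_pos hc hk.le (p + q)
          have : ‖x‖ ≤ X := le_max_left _ _
          have : ‖y‖ ≤ X := le_max_right _ _
          simp only [M, pow_add]
          bound
  refine Summable.of_norm_bounded (summable_of_nonneg_of_summable_sum_antidiagonal hM ?_) hbound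
  simp only [hsum]
  exact summable_risingProd_mul_div_factorial_mul_pow hk (norm_nonneg a)
    (add_nonneg (norm_nonneg b) (norm_nonneg b')) hc (le_max_of_le_left (norm_nonneg x)) hkX

theorem generating_relation_F1k2_general (k : ℝ) (hk : 0 < k) (α β γ δ t x : ℂ)
    (hα : 0 < α.re) (hβα : α.re < β.re) (hγ : 0 < γ.re) (hδγ : γ.re < δ.re)
    (ht : ‖t‖ < 1 / k)
    (ht' : ‖(1 - (k : ℂ) * x) * t‖ < 1 / k) :
    ∑' n : ℕ, kPoch k β n * kPoch k γ n / (kPoch k δ n * (n.factorial : ℂ)) *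
        hyp2F1k k (-((n : ℂ) * (k : ℂ))) α β x * t ^ n =
      F1k k γ (β - α) α δ t ((1 - (k : ℂ) * x) * t) := by
  have hβ : 0 < β.re := hα.trans hβα
  have hδ : 0 < δ.re := hγ.trans hδγ
  rw [F1k_eq_tsum_F1kTerm,
    (summable_F1kTerm hk γ (β - α) α hδ ht ht').tsum_eq_tsum_sum_antidiagonal]
  exact tsum_congr fun n =>
    kPoch_mul_div_mul_hyp2F1k_neg_mul_pow (kPoch_ne_zero hk.le hβ n) α γ δ t x

theorem generating_relation_F1k2 (k : ℝ) (hk : 0 < k) (α β γ δ t x : ℂ)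
    (hα : 0 < α.re) (hβα : α.re < β.re) (hγ : 0 < γ.re) (hδγ : γ.re < δ.re)
    (hx : ‖x‖ < 1 / k) (ht : ‖t‖ < 1 / k)
    (ht' : ‖(1 - (k : ℂ) * x) * t‖ < 1 / k) :
    ∑' n : ℕ, kPoch k β n * kPoch k γ n / (kPoch k δ n * (n.factorial : ℂ)) *
        hyp2F1k k (-((n : ℂ) * (k : ℂ))) α β x * t ^ n =
      F1k k γ (β - α) α δ t ((1 - (k : ℂ) * x) * t) :=
  generating_relation_F1k2_general k hk α β γ δ t x hα hβα hγ hδγ ht ht'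
end
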